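/- For every 3-CNF formula ψ, the formula ψ is satisfiable if and only if there exists a Boolean well-defined valuation val of the positive-reachability pMC E_ψ such that Pr_{E_ψ[val]}(◇{c_{m+1}}) > 0. -/

import Mathlib

/-- A finite path in state space `S`: a length `m` together with `m + 1` states. -/
abbrev MCPath (S : Type) : Type := Σ m : ℕ, Fin (m + 1) → S

/-- The mass of a path: the product of the transition probabilities along it. -/
def pathMass {S : Type} (P : S → S → ℝ) (π : MCPath S) : ℝ :=
  ∏ i : Fin π.1, P (π.2 i.castSucc) (π.2 i.succ)

/-- A hitting path from `s` to `T`: it starts in `s`, ends in `T`, and no proper prefix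
visits `T`. -/
def IsHitting {S : Type} (T : Set S) (s : S) (π : MCPath S) : Prop :=
  π.2 0 = s ∧ π.2 (Fin.last π.1) ∈ T ∧ ∀ i : Fin π.1, π.2 i.castSucc ∉ T

/-- The reachability probability `Pr_{P,s}(◇T)`: the sum of the masses of all hitting
paths from `s` to `T`. -/
noncomputable def reachProb {S : Type} (P : S → S → ℝ) (T : Set S) (s : S) : ℝ :=
  ∑' π : {π : MCPath S // IsHitting T s π}, pathMass P π.1

/-- A literal is a polarity (`true` = positive) together with a variable index. -/
abbrev Lit (k : ℕ) : Type := Bool × Fin k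

/-- Boolean evaluation of a literal under a Boolean assignment. -/
def litBool {k : ℕ} (σ : Fin k → Bool) (l : Lit k) : Bool :=
  if l.1 then σ l.2 else !(σ l.2)

/-- States of the positive-reachability pMC `E_ψ`: clause states `c₁,…,c_{m+1}`, literal
states `l_{i,j}` and a sink `⊥`. -/
inductive EState (m : ℕ) where
  | clause : Fin (m + 1) → EState m
  | lit : Fin m → Fin 3 → EState m
  | sink : EState m
deriving DecidableEq

/-- Parameters of `E_ψ`: `x̃` for each variable and `y_{i,j}` for each clause `i` and literal
position `j`. -/
inductive EParam (k m : ℕ) where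
  | xt : Fin k → EParam k m
  | y : Fin m → Fin 3 → EParam k m
deriving DecidableEq

open MvPolynomial in
/-- Encoding of a literal: `enc(x) = x̃`, `enc(¬x) = 1 - x̃`. -/
noncomputable def encLit {k m : ℕ} (l : Lit k) : MvPolynomial (EParam k m) ℚ :=
  if l.1 then X (.xt l.2) else 1 - X (.xt l.2)

open MvPolynomial in
/-- Transition polynomials of the positive-reachability pMC `E_ψ` for a 3-CNF formula `ψ`:
`𝒫(c_i, l_{i,j}) = y_{i,j}`, `𝒫(l_{i,j}, c_{i+1}) = enc(l_{i,j})`,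
`𝒫(l_{i,j}, ⊥) = 1 - enc(l_{i,j})`, and probability-one self-loops at `c_{m+1}` and `⊥`. -/
noncomputable def posReachP (k m : ℕ) (ψ : Fin m → Fin 3 → Lit k) :
    EState m → EState m → MvPolynomial (EParam k m) ℚ
  | .clause i, .lit a j => if (i : ℕ) = (a : ℕ) then X (.y a j) else 0
  | .lit a j, .clause i => if (i : ℕ) = (a : ℕ) + 1 then encLit (ψ a j) else 0
  | .lit a j, .sink => 1 - encLit (ψ a j)
  | .clause i, .clause i' => if (i : ℕ) = m ∧ (i' : ℕ) = m then 1 else 0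
  | .sink, .sink => 1
  | _, _ => 0

/-- A Boolean well-defined valuation of the parameters of `E_ψ`: every parameter gets a value
in `{0,1}` and `y_{i,1} + y_{i,2} + y_{i,3} = 1` for every clause `i`. -/
def EBoolWD {k m : ℕ} (val : EParam k m → ℝ) : Prop :=
  (∀ p, val p = 0 ∨ val p = 1) ∧
  ∀ i : Fin m, val (.y i 0) + val (.y i 1) + val (.y i 2) = 1

/-
Under any valuation, a transition of `E_ψ` with nonzero probability either enters the sink, which
is absorbing, or climbs one layer of the chain `c₁ → l_{1,·} → c₂ → ⋯ → l_{m,·} → c_{m+1}`. So a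
hitting path of nonzero mass never meets the sink: it walks the chain, picking one literal per
clause and leaving it with probability `enc(l)`, which for a Boolean valuation is nonzero exactly
when the literal is true. Conversely, a satisfying assignment with a true literal chosen in every
clause gives a valuation under which that walk has mass one. Since every hitting path of nonzero
mass has length `2m`, only finitely many contribute to `Pr(◇{c_{m+1}})`, so the sum is positive.
-/

open MvPolynomial

section MarkovChain

variable {S : Type} {P : S → S → ℝ} {T : Set S} {s : S}

theorem pathMass_ne_zero_iff {π : MCPath S} :
    pathMass P π ≠ 0 ↔ ∀ i : Fin π.1, P (π.2 i.castSucc) (π.2 i.succ) ≠ 0 := by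
  simp [pathMass, Finset.prod_ne_zero_iff]

theorem pathMass_mk_val (n : ℕ) (f : ℕ → S) :
    pathMass P ⟨n, fun p => f p⟩ = ∏ r ∈ Finset.range n, P (f r) (f (r + 1)) :=
  Fin.prod_univ_eq_prod_range (fun r => P (f r) (f (r + 1))) n

theorem apply_ne_of_pathMass_ne_zero {π : MCPath S} (hπ : pathMass P π ≠ 0) {a : S}
    (ha : ∀ s, P a s ≠ 0 → s = a) (hlast : π.2 (Fin.last π.1) ≠ a) (p : Fin (π.1 + 1)) :
    π.2 p ≠ a := by
  induction p using Fin.reverseInduction with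
  | last => exact hlast
  | cast i ih => exact fun h => ih (ha _ (h ▸ pathMass_ne_zero_iff.mp hπ i))

theorem exists_isHitting_pathMass_ne_zero (h : reachProb P T s ≠ 0) :
    ∃ π, IsHitting T s π ∧ pathMass P π ≠ 0 := by
  by_contra! hzero
  exact h (by simp [reachProb, fun π : {π // IsHitting T s π} => hzero π.1 π.2])

theorem reachProb_pos [Finite S] (hP : ∀ s s', 0 ≤ P s s') (n : ℕ)
    (hlen : ∀ π, IsHitting T s π → pathMass P π ≠ 0 → π.1 = n)
    {π : MCPath S} (hπ : IsHitting T s π) (hpos : 0 < pathMass P π) :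
    0 < reachProb P T s := by
  have hfin : (Function.support fun π : {π // IsHitting T s π} => pathMass P π.1).Finite := by
    refine ((Set.finite_range (Sigma.mk n)).preimage Subtype.val_injective.injOn).subset ?_
    rintro ⟨⟨m, f⟩, hσ⟩ hne
    obtain rfl : m = n := hlen _ hσ hne
    exact ⟨f, rfl⟩
  exact (summable_of_hasFiniteSupport hfin).tsum_pos
    (fun π => Finset.prod_nonneg fun _ _ => hP _ _) ⟨π, hπ⟩ hpos

end MarkovChain

section PosReach

variable {k m : ℕ}

noncomputable def posReachEval (ψ : Fin m → Fin 3 → Lit k) (val : EParam k m → ℝ)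
    (s s' : EState m) : ℝ :=
  aeval val (posReachP k m ψ s s')

theorem aeval_encLit_mem_Icc {val : EParam k m → ℝ} (hval : ∀ p, val p ∈ Set.Icc 0 1)
    (l : Lit k) : aeval val (encLit (m := m) l) ∈ Set.Icc (0 : ℝ) 1 := by
  obtain ⟨_ | _, v⟩ := l <;> have := hval (.xt v) <;> simp_all [encLit]

theorem aeval_encLit_of_bool {val : EParam k m → ℝ} {σ : Fin k → Bool}
    (hσ : ∀ v, val (.xt v) = if σ v then 1 else 0) (l : Lit k) :
    aeval val (encLit (m := m) l) = if litBool σ l then (1 : ℝ) else 0 := by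
  obtain ⟨_ | _, v⟩ := l <;> cases h : σ v <;> simp [encLit, litBool, hσ, h]

theorem posReachEval_nonneg (ψ : Fin m → Fin 3 → Lit k) {val : EParam k m → ℝ}
    (hval : ∀ p, val p ∈ Set.Icc 0 1) (s s' : EState m) : 0 ≤ posReachEval ψ val s s' := by
  have henc := aeval_encLit_mem_Icc hval
  cases s <;> cases s' <;> simp only [posReachEval, posReachP] <;> (try split_ifs) <;>
    simp [(hval _).1, (henc _).1, (henc _).2]

instance EState.finite : Finite (EState m) :=
  Finite.of_surjective
    (fun x : Option (Fin (m + 1) ⊕ Fin m × Fin 3) =>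
      x.elim .sink (Sum.elim .clause fun p => .lit p.1 p.2))
    fun
      | .clause i => ⟨some (.inl i), rfl⟩
      | .lit a j => ⟨some (.inr (a, j)), rfl⟩
      | .sink => ⟨none, rfl⟩

/-- Clause `cᵢ₊₁` sits on layer `2i`, the literals of clause `i + 1` on layer `2i + 1`; the
sink, which no hitting path of nonzero mass visits, gets an arbitrary layer. -/
def EState.layer : EState m → ℕ
  | .clause i => 2 * i
  | .lit a _ => 2 * a + 1
  | .sink => 0

theorem EState.exists_lit_of_layer_eq {s : EState m} {i : Fin m} (h : s.layer = 2 * i + 1) :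
    ∃ j, s = .lit i j := by
  cases s with
  | lit a j => exact ⟨j, congrArg (lit · j) (Fin.ext (by simp only [layer] at h; omega))⟩
  | clause i => simp only [layer] at h; omega
  | sink => simp [layer] at h

variable (ψ : Fin m → Fin 3 → Lit k) (val : EParam k m → ℝ)

theorem eq_sink_of_posReachEval_sink_ne_zero {s : EState m}
    (h : posReachEval ψ val .sink s ≠ 0) : s = .sink := by
  cases s <;> simp_all [posReachEval, posReachP]

theorem layer_succ_of_posReachEval_ne_zero {s s' : EState m}
    (hs : s ≠ .clause (Fin.last m)) (hs' : s' ≠ .sink) (h : posReachEval ψ val s s' ≠ 0) :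
    s'.layer = s.layer + 1 := by
  cases s <;> cases s' <;> simp only [posReachEval, posReachP] at h <;> (try split_ifs at h) <;>
    simp_all [EState.layer, Fin.ext_iff, mul_add]

theorem aeval_encLit_ne_zero_of_posReachEval_ne_zero {a : Fin m} {j : Fin 3} {s' : EState m}
    (hs' : s' ≠ .sink) (h : posReachEval ψ val (.lit a j) s' ≠ 0) :
    aeval val (encLit (m := m) (ψ a j)) ≠ 0 := by
  cases s' <;> simp only [posReachEval, posReachP] at h <;> (try split_ifs at h) <;> simp_all

variable {ψ val} {π : MCPath (EState m)}
  (hπ : IsHitting {.clause (Fin.last m)} (.clause 0) π)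
  (hmass : pathMass (posReachEval ψ val) π ≠ 0)
include hπ hmass

theorem ne_sink_of_isHitting (p : Fin (π.1 + 1)) : π.2 p ≠ .sink :=
  apply_ne_of_pathMass_ne_zero hmass (fun _ => eq_sink_of_posReachEval_sink_ne_zero ψ val)
    (by rw [Set.mem_singleton_iff.mp hπ.2.1]; simp) p

theorem layer_eq_of_isHitting (p : Fin (π.1 + 1)) : (π.2 p).layer = p := by
  induction p using Fin.induction with
  | zero => rw [hπ.1]; rfl
  | succ i ih =>
    rw [Fin.val_succ, ← Fin.val_castSucc, ← ih]
    exact layer_succ_of_posReachEval_ne_zero ψ val (hπ.2.2 i) (ne_sink_of_isHitting hπ hmass _)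
      (pathMass_ne_zero_iff.mp hmass i)

theorem length_eq_of_isHitting : π.1 = 2 * m := by
  have := layer_eq_of_isHitting hπ hmass (Fin.last _)
  rwa [Set.mem_singleton_iff.mp hπ.2.1, Fin.val_last, EState.layer, Fin.val_last, eq_comm] at this

theorem exists_aeval_encLit_ne_zero_of_isHitting (i : Fin m) :
    ∃ j, aeval val (encLit (m := m) (ψ i j)) ≠ 0 := by
  have hlen := length_eq_of_isHitting hπ hmass
  let step : Fin π.1 := ⟨2 * i + 1, by omega⟩
  obtain ⟨j, hlit⟩ :=
    EState.exists_lit_of_layer_eq (layer_eq_of_isHitting hπ hmass step.castSucc)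
  have hstep := pathMass_ne_zero_iff.mp hmass step
  rw [hlit] at hstep
  exact ⟨j, aeval_encLit_ne_zero_of_posReachEval_ne_zero ψ val
    (ne_sink_of_isHitting hπ hmass _) hstep⟩

end PosReach

section Chain

variable {k m : ℕ}

def EState.ofLayer (j : Fin m → Fin 3) (r : ℕ) : EState m :=
  if h : r / 2 < m then
    if r % 2 = 0 then .clause ⟨r / 2, by omega⟩ else .lit ⟨r / 2, h⟩ (j ⟨r / 2, h⟩)
  else .clause (Fin.last m)

theorem EState.ofLayer_two_mul (j : Fin m → Fin 3) {t : ℕ} (ht : t ≤ m) :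
    ofLayer j (2 * t) = .clause ⟨t, by omega⟩ := by
  rcases ht.lt_or_eq with ht | rfl
  · simp [ofLayer, ht]
  · simp [ofLayer, Fin.last]

theorem EState.ofLayer_two_mul_add_one (j : Fin m → Fin 3) {t : ℕ} (ht : t < m) :
    ofLayer j (2 * t + 1) = .lit ⟨t, ht⟩ (j ⟨t, ht⟩) := by
  simp [ofLayer, show (2 * t + 1) / 2 = t by omega, ht, Nat.add_mod]

theorem EState.layer_ofLayer (j : Fin m → Fin 3) {r : ℕ} (hr : r ≤ 2 * m) :
    (ofLayer j r).layer = r := by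
  obtain ⟨t, rfl | rfl⟩ := Nat.even_or_odd' r
  · rw [ofLayer_two_mul j (by omega)]; rfl
  · rw [ofLayer_two_mul_add_one j (by omega)]; rfl

def chainPath (j : Fin m → Fin 3) : MCPath (EState m) :=
  ⟨2 * m, fun p => EState.ofLayer j p⟩

theorem isHitting_chainPath (j : Fin m → Fin 3) :
    IsHitting {.clause (Fin.last m)} (.clause 0) (chainPath j) := by
  refine ⟨EState.ofLayer_two_mul j (t := 0) (Nat.zero_le m), EState.ofLayer_two_mul j le_rfl,
    fun i hi => ?_⟩
  have hlayer : (EState.ofLayer j i).layer = (EState.clause (Fin.last m)).layer :=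
    congrArg EState.layer (Set.mem_singleton_iff.mp hi)
  have hi : (i : ℕ) < 2 * m := i.isLt
  rw [EState.layer_ofLayer j hi.le] at hlayer
  simp only [EState.layer, Fin.val_last] at hlayer
  omega

theorem pathMass_chainPath_pos (ψ : Fin m → Fin 3 → Lit k) (val : EParam k m → ℝ)
    {j : Fin m → Fin 3} (hy : ∀ i, 0 < val (.y i (j i)))
    (henc : ∀ i, 0 < aeval val (encLit (m := m) (ψ i (j i)))) :
    0 < pathMass (posReachEval ψ val) (chainPath j) := by
  rw [chainPath, pathMass_mk_val]
  refine Finset.prod_pos fun r hr => ?_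
  have hr : r < 2 * m := Finset.mem_range.mp hr
  obtain ⟨t, rfl | rfl⟩ := Nat.even_or_odd' r
  · rw [EState.ofLayer_two_mul j (by omega), EState.ofLayer_two_mul_add_one j (by omega)]
    simpa [posReachEval, posReachP] using hy _
  · rw [EState.ofLayer_two_mul_add_one j (by omega), show 2 * t + 1 + 1 = 2 * (t + 1) by omega,
      EState.ofLayer_two_mul j (by omega)]
    simpa [posReachEval, posReachP] using henc _

def boolVal (σ : Fin k → Bool) (j : Fin m → Fin 3) : EParam k m → ℝ
  | .xt v => if σ v then 1 else 0
  | .y i j' => if j' = j i then 1 else 0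

theorem eBoolWD_boolVal (σ : Fin k → Bool) (j : Fin m → Fin 3) : EBoolWD (boolVal σ j) := by
  refine ⟨fun p => ?_, fun i => ?_⟩
  · cases p <;> simp only [boolVal] <;> split_ifs <;> simp
  · simp only [boolVal]
    generalize j i = j₀
    fin_cases j₀ <;> simp

end Chain

/-- Proposition 14 of the paper: a 3-CNF formula `ψ` is satisfiable iff some Boolean
well-defined valuation of the positive-reachability pMC `E_ψ` reaches the target `c_{m+1}`
from `c₁` with positive probability. -/
theorem threeSat_iff_posReach_positive (k m : ℕ) (ψ : Fin m → Fin 3 → Lit k) :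
    (∃ σ : Fin k → Bool, ∀ i, ∃ j, litBool σ (ψ i j) = true) ↔
    (∃ val : EParam k m → ℝ, EBoolWD val ∧
      reachProb (fun s s' => (MvPolynomial.aeval val (posReachP k m ψ s s') : ℝ))
        {EState.clause (Fin.last m)} (EState.clause 0) > 0) := by
  constructor
  · rintro ⟨σ, hσ⟩
    choose j hj using hσ
    have henc := aeval_encLit_of_bool (val := boolVal σ j) (fun _ => rfl)
    have hunit : ∀ p, boolVal σ j p ∈ Set.Icc 0 1 := fun p => by
      rcases (eBoolWD_boolVal σ j).1 p with h | h <;> simp [h]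
    exact ⟨boolVal σ j, eBoolWD_boolVal σ j,
      reachProb_pos (posReachEval_nonneg ψ hunit) (2 * m)
        (fun _ hπ hmass => length_eq_of_isHitting hπ hmass) (isHitting_chainPath j)
        (pathMass_chainPath_pos ψ _ (fun i => by simp [boolVal]) (fun i => by simp [henc, hj]))⟩
  · rintro ⟨val, ⟨hbool, -⟩, hpos⟩
    obtain ⟨π, hπ, hmass⟩ := exists_isHitting_pathMass_ne_zero hpos.ne'
    let σ v : Bool := val (.xt v) = 1
    have henc := aeval_encLit_of_bool (val := val) (σ := σ)
      (fun v => by rcases hbool (.xt v) with h | h <;> simp [σ, h])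
    refine ⟨σ, fun i => ?_⟩
    obtain ⟨j, hj⟩ := exists_aeval_encLit_ne_zero_of_isHitting hπ hmass i
    exact ⟨j, by simpa [henc] using hj⟩
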